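/- arXiv:2405.12680 — 2 statements merged into one kernel-verified Lean document; each statement's English description precedes it below -/
import Mathlib

section
/- Let p be a prime, R a commutative ring, and let V : R^ℕ → R^ℕ be defined by V(r_0, r_1, ...) = p·(0, r_0, r_1, ...). Let X(R) ⊆ R^ℕ be the closed subgroup (in the product topology, R discrete) generated by {V^n⟨r⟩ : n ≥ 0, r ∈ R}, where ⟨r⟩ = (r, r^p, r^{p^2}, ...). Then for every n ≥ 0, X(R) ∩ ({0}^n × R × R × ···) = V^n(X(R)). -/
/-- The Teichmüller sequence `⟨r⟩ = (r, r^p, r^{p^2}, ...)` in `R^ℕ`. -/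
def teich (p : ℕ) {R : Type*} [CommRing R] (r : R) : ℕ → R := fun k => r ^ p ^ k

/-- The Verschiebung `V(r_0, r_1, ...) = p • (0, r_0, r_1, ...)` on `R^ℕ`. -/
def Vmap (p : ℕ) {R : Type*} [CommRing R] : (ℕ → R) → (ℕ → R) :=
  fun r k => match k with
  | 0 => 0
  | m + 1 => (p : R) * r m

/-- `X(R)`: the closed subgroup of `R^ℕ` (product topology, `R` discrete)
generated by the elements `V^n⟨r⟩`. -/
def XR (p : ℕ) (R : Type*) [CommRing R] : AddSubgroup (ℕ → R) :=
  letI : TopologicalSpace R := ⊥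
  haveI : DiscreteTopology R := ⟨rfl⟩
  (AddSubgroup.closure {x : ℕ → R | ∃ n r, x = (Vmap p)^[n] (teich p r)}).topologicalClosure

/-! ### Auxiliary development -/

/-- The "partial ghost map": `gh p a k = ∑_{j ≤ k} p^j (a j)^(p^(k-j))`. -/
def gh (p : ℕ) {R : Type*} [CommRing R] (a : ℕ → R) : ℕ → R :=
  fun k => ∑ j ∈ Finset.range (k + 1), (p : R) ^ j * a j ^ p ^ (k - j)

lemma L1 {R : Type*} [CommRing R] {c u v : R} (h : c * (u - v) = 0) (e : ℕ) :
    c * u ^ e = c * v ^ e := by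
  obtain ⟨q, hq⟩ := sub_dvd_pow_sub_pow u v e
  have : c * (u ^ e - v ^ e) = 0 := by
    rw [hq, show c * ((u - v) * q) = c * (u - v) * q by ring, h, zero_mul]
  linear_combination this

/-- Rigidity: equal partial ghost components force `p^j a j = p^j b j`. -/
lemma rigid {R : Type*} [CommRing R] {p n : ℕ} {a b : ℕ → R}
    (h : ∀ i < n, gh p a i = gh p b i) :
    ∀ j, j < n → (p : R) ^ j * a j = (p : R) ^ j * b j := by
  intro j hj
  induction j using Nat.strong_induction_on with
  | _ j ih =>
    have hgh := h j hj
    unfold gh at hgh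
    rw [Finset.sum_range_succ, Finset.sum_range_succ] at hgh
    have hsum : ∑ i ∈ Finset.range j, (p : R) ^ i * a i ^ p ^ (j - i)
        = ∑ i ∈ Finset.range j, (p : R) ^ i * b i ^ p ^ (j - i) := by
      refine Finset.sum_congr rfl fun i hi => ?_
      have hi' := Finset.mem_range.mp hi
      exact L1 (by linear_combination ih i hi' (lt_trans hi' hj)) _
    rw [hsum] at hgh
    simpa using add_left_cancel hgh

lemma Vmap_iterate {R : Type*} [CommRing R] (p : ℕ) (y : ℕ → R) (n k : ℕ) :
    (Vmap p)^[n] y k = if k < n then 0 else (p : R) ^ n * y (k - n) := by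
  induction n generalizing k with
  | zero => simp
  | succ n ih =>
    rw [Function.iterate_succ_apply']
    match k with
    | 0 => simp [Vmap]
    | m + 1 =>
      show (p : R) * (Vmap p)^[n] y m = _
      rw [ih]
      by_cases h : m < n
      · simp [h, Nat.succ_lt_succ h]
      · rw [if_neg h, if_neg (by omega)]
        rw [Nat.succ_sub_succ]
        ring

section Lift
variable {R : Type*} [CommRing R]

open Classical in
/-- Recursive lift of a sequence along the partial ghost map. -/
noncomputable def lift (p : ℕ) (x : ℕ → R) : ℕ → R
  | k =>
    if h : ∃ t : R, (∑ j ∈ (Finset.range k).attach,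
          (p : R) ^ (j : ℕ) * (lift p x j) ^ p ^ (k - (j : ℕ))) + (p : R) ^ k * t = x k
    then h.choose else 0
  termination_by k => k
  decreasing_by all_goals exact Finset.mem_range.mp j.2

lemma lift_spec (p : ℕ) (x : ℕ → R)
    (hx : ∀ N : ℕ, ∃ a : ℕ → R, ∀ k < N, gh p a k = x k) :
    ∀ k, gh p (lift p x) k = x k := by
  intro k
  induction k using Nat.strong_induction_on with
  | _ k ih =>
    obtain ⟨a, ha⟩ := hx (k + 1)
    have key : ∑ j ∈ Finset.range k, (p : R) ^ j * (lift p x j) ^ p ^ (k - j)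
        = ∑ j ∈ Finset.range k, (p : R) ^ j * (a j) ^ p ^ (k - j) := by
      refine Finset.sum_congr rfl fun j hj => ?_
      have hj' := Finset.mem_range.mp hj
      have h1 : ∀ i < k, gh p (lift p x) i = gh p a i := fun i hi => by
        rw [ih i hi, ha i (by omega)]
      exact L1 (by linear_combination rigid h1 j hj') _
    have hex : ∃ t : R, (∑ j ∈ (Finset.range k).attach,
          (p : R) ^ (j : ℕ) * (lift p x j) ^ p ^ (k - (j : ℕ))) + (p : R) ^ k * t = x k := by
      refine ⟨a k, ?_⟩
      rw [Finset.sum_attach (Finset.range k)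
        (fun j => (p : R) ^ j * (lift p x j) ^ p ^ (k - j)), key]
      have := ha k (by omega)
      unfold gh at this
      rw [Finset.sum_range_succ] at this
      simpa using this
    have hk : lift p x k = hex.choose := by
      conv_lhs => rw [lift]
      exact dif_pos hex
    unfold gh
    rw [Finset.sum_range_succ, ← Finset.sum_attach (Finset.range k)
        (fun j => (p : R) ^ j * (lift p x j) ^ p ^ (k - j)), hk,
      Nat.sub_self, pow_zero, pow_one]
    exact hex.choose_spec

end Lift

section Topo
variable {R : Type*} [TopologicalSpace R] [DiscreteTopology R]

lemma mem_closure_pi' {s : Set (ℕ → R)} {x : ℕ → R} :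
    x ∈ closure s ↔ ∀ N : ℕ, ∃ y ∈ s, ∀ k < N, y k = x k := by
  constructor
  · intro hx N
    have hU : IsOpen {y : ℕ → R | ∀ k < N, y k = x k} := by
      have : {y : ℕ → R | ∀ k < N, y k = x k}
          = ⋂ k ∈ Finset.range N, (fun y : ℕ → R => y k) ⁻¹' {x k} := by
        ext y; simp [Set.mem_iInter, Finset.mem_range]
      rw [this]
      exact isOpen_biInter_finset fun k _ =>
        (continuous_apply k).isOpen_preimage _ (isOpen_discrete _)
    have := (mem_closure_iff.mp hx) _ hU (fun k _ => rfl)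
    obtain ⟨y, hy1, hy2⟩ := this
    exact ⟨y, hy2, hy1⟩
  · intro h
    rw [mem_closure_iff]
    intro U hU hxU
    obtain ⟨I, u, hu, hsub⟩ := isOpen_pi_iff.mp hU x hxU
    obtain ⟨y, hy, hagree⟩ := h ((I.sup id) + 1)
    refine ⟨y, hsub fun a ha => ?_, hy⟩
    rw [hagree a (Nat.lt_succ_of_le (Finset.le_sup (f := id) ha))]
    exact (hu a ha).2

end Topo

section Witt
open WittVector
variable (p : ℕ) [hp : Fact p.Prime] {R : Type*} [CommRing R]

lemma ghostMap_eq_gh (w : WittVector p R) : ghostMap w = gh p w.coeff := by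
  funext k
  rw [ghostMap_apply, ghostComponent_apply, aeval_wittPolynomial]
  rfl

lemma gh_eq_ghostMap (a : ℕ → R) : gh p a = ghostMap (WittVector.mk p a) := by
  rw [ghostMap_eq_gh, WittVector.coeff_mk]

lemma ghostMap_verschiebung (w : WittVector p R) :
    ghostMap (verschiebung w) = Vmap p (ghostMap w) := by
  funext k
  cases k with
  | zero =>
    rw [ghostMap_apply, ghostComponent_zero_verschiebung]; rfl
  | succ m =>
    rw [ghostMap_apply, ghostComponent_verschiebung]
    show _ = (p : R) * ghostMap w m
    rw [ghostMap_apply]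

lemma ghostMap_teichmuller (r : R) :
    ghostMap (WittVector.teichmuller p r) = teich p r := by
  funext k
  rw [ghostMap_apply, ghostComponent_teichmuller]
  rfl

lemma gen_eq_ghostMap (n : ℕ) (r : R) :
    (Vmap p)^[n] (teich p r) = ghostMap (verschiebung^[n] (WittVector.teichmuller p r)) := by
  induction n with
  | zero => rw [Function.iterate_zero_apply, Function.iterate_zero_apply, ghostMap_teichmuller]
  | succ n ih =>
    rw [Function.iterate_succ_apply', Function.iterate_succ_apply',
      ghostMap_verschiebung, ih]

/-- The image of the ghost map, as an additive subgroup. -/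
noncomputable def Esub (R : Type*) [CommRing R] : AddSubgroup (ℕ → R) :=
  ((ghostMap : WittVector p R →+* ℕ → R).toAddMonoidHom).range

lemma Esub_eq_range : (Esub p R : Set (ℕ → R)) = Set.range (gh p (R := R)) := by
  ext x
  constructor
  · rintro ⟨w, rfl⟩
    exact ⟨w.coeff, (ghostMap_eq_gh p w).symm⟩
  · rintro ⟨a, rfl⟩
    exact ⟨WittVector.mk p a, (gh_eq_ghostMap p a).symm⟩

end Witt

section Core
variable {R : Type*} [CommRing R] {p : ℕ} (hp : p ≠ 0)
include hp

lemma gh_zero (i : ℕ) : gh p (fun _ => (0 : R)) i = 0 := by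
  unfold gh
  refine Finset.sum_eq_zero fun j _ => ?_
  rw [zero_pow (pow_ne_zero _ hp), mul_zero]

lemma Vmap_gh (a : ℕ → R) :
    Vmap p (gh p a) = gh p (fun j => match j with | 0 => 0 | m + 1 => a m) := by
  funext k
  match k with
  | 0 =>
    show (0 : R) = _
    unfold gh
    simp
  | m + 1 =>
    show (p : R) * gh p a m = _
    unfold gh
    rw [Finset.sum_range_succ' (fun i => (p : R) ^ i *
      (match i with | 0 => (0:R) | m + 1 => a m) ^ p ^ (m + 1 - i)) (m + 1)]
    simp only [pow_zero, one_mul, Nat.succ_sub_succ]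
    rw [zero_pow (pow_ne_zero _ hp), add_zero, Finset.mul_sum]
    exact Finset.sum_congr rfl fun i _ => by ring

lemma mem_range_gh_Vmap {x : ℕ → R} (hx : x ∈ Set.range (gh p)) :
    Vmap p x ∈ Set.range (gh p) := by
  obtain ⟨a, rfl⟩ := hx
  exact ⟨_, (Vmap_gh hp a).symm⟩

lemma mem_range_gh_Vmap_iterate {x : ℕ → R} (hx : x ∈ Set.range (gh p)) (n : ℕ) :
    (Vmap p)^[n] x ∈ Set.range (gh p) := by
  induction n with
  | zero => simpa
  | succ n ih => rw [Function.iterate_succ_apply']; exact mem_range_gh_Vmap hp ih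

/-- Core decomposition: a ghost image vanishing below `n` is `V^n` of a ghost image. -/
lemma gh_zeros_eq_iterate {a : ℕ → R} {n : ℕ} (h : ∀ k < n, gh p a k = 0) :
    gh p a = (Vmap p)^[n] (gh p (fun m => a (m + n))) := by
  have hz : ∀ j < n, (p : R) ^ j * a j = 0 := by
    intro j hj
    have := rigid (a := a) (b := fun _ => (0:R)) (n := n)
      (fun i hi => by rw [h i hi, gh_zero hp]) j hj
    simpa using this
  funext k
  rw [Vmap_iterate]
  by_cases hk : k < n
  · rw [if_pos hk]; exact h k hk
  · rw [if_neg hk]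
    have hnk : n ≤ k := le_of_not_gt hk
    unfold gh
    rw [Finset.range_eq_Ico, ← Finset.sum_Ico_consecutive _ (Nat.zero_le n) (by omega),
      ← Finset.range_eq_Ico]
    have h1 : ∑ j ∈ Finset.range n, (p : R) ^ j * a j ^ p ^ (k - j) = 0 := by
      refine Finset.sum_eq_zero fun j hj => ?_
      have hj' := Finset.mem_range.mp hj
      calc (p : R) ^ j * a j ^ p ^ (k - j)
          = (p : R) ^ j * (0 : R) ^ p ^ (k - j) :=
            L1 (by simpa using hz j hj') _
        _ = 0 := by rw [zero_pow (pow_ne_zero _ hp), mul_zero]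
    rw [h1, zero_add, Finset.sum_Ico_eq_sum_range]
    rw [show k + 1 - n = k - n + 1 by omega, Finset.mul_sum]
    refine Finset.sum_congr rfl fun i _ => ?_
    show (p:R) ^ (n + i) * a (n + i) ^ p ^ (k - (n + i))
        = (p:R) ^ n * ((p:R) ^ i * a (i + n) ^ p ^ (k - n - i))
    rw [show n + i = i + n by omega, show k - (i + n) = k - n - i by omega, pow_add]
    ring
end Core

section Density
variable {R : Type*} [CommRing R] [TopologicalSpace R] [DiscreteTopology R] {p : ℕ}

lemma gh_mem_closure (a : ℕ → R) :
    gh p a ∈ closure ((AddSubgroup.closure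
      {x : ℕ → R | ∃ n r, x = (Vmap p)^[n] (teich p r)} : AddSubgroup (ℕ → R)) :
        Set (ℕ → R)) := by
  rw [mem_closure_pi']
  intro N
  refine ⟨∑ m ∈ Finset.range N, (Vmap p)^[m] (teich p (a m)), ?_, ?_⟩
  · exact AddSubgroup.sum_mem _ fun m _ => AddSubgroup.subset_closure ⟨m, a m, rfl⟩
  · intro k hk
    rw [Finset.sum_apply]
    have hterm : ∀ m, (Vmap p)^[m] (teich p (a m)) k
        = if k < m then 0 else (p : R) ^ m * (a m) ^ p ^ (k - m) := fun m => by
      rw [Vmap_iterate]; rfl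
    calc ∑ m ∈ Finset.range N, (Vmap p)^[m] (teich p (a m)) k
        = ∑ m ∈ Finset.range (k + 1), (Vmap p)^[m] (teich p (a m)) k := by
          refine (Finset.sum_subset ?_ ?_).symm
          · exact Finset.range_subset_range.mpr (by omega)
          · intro m _ hm
            rw [hterm m, if_pos (by simpa using Finset.mem_range.not.mp hm)]
      _ = gh p a k := by
          refine Finset.sum_congr rfl fun m hm => ?_
          rw [hterm m, if_neg (by have := Finset.mem_range.mp hm; omega)]

end Density

lemma XR_eq (p : ℕ) (hp : p.Prime) (R : Type*) [CommRing R] :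
    (XR p R : Set (ℕ → R)) = Set.range (gh p (R := R)) := by
  haveI := Fact.mk hp
  letI : TopologicalSpace R := ⊥
  haveI : DiscreteTopology R := ⟨rfl⟩
  have hclosed : IsClosed (Set.range (gh p (R := R))) := by
    refine isClosed_of_closure_subset fun x hx => ?_
    rw [mem_closure_pi'] at hx
    have hx' : ∀ N, ∃ a : ℕ → R, ∀ k < N, gh p a k = x k := fun N => by
      obtain ⟨y, ⟨a, rfl⟩, hy⟩ := hx N
      exact ⟨a, hy⟩
    exact ⟨lift p x, funext (lift_spec p x hx')⟩
  apply subset_antisymm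
  · show ((AddSubgroup.closure
        {x : ℕ → R | ∃ n r, x = (Vmap p)^[n] (teich p r)}).topologicalClosure :
          Set (ℕ → R)) ⊆ _
    rw [AddSubgroup.topologicalClosure_coe]
    refine closure_minimal ?_ hclosed
    have hle : AddSubgroup.closure {x : ℕ → R | ∃ n r, x = (Vmap p)^[n] (teich p r)}
        ≤ Esub p R := by
      rw [AddSubgroup.closure_le]
      rintro x ⟨m, r, rfl⟩
      rw [SetLike.mem_coe]
      exact ⟨WittVector.verschiebung^[m] (WittVector.teichmuller p r),
        (gen_eq_ghostMap p m r).symm⟩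
    intro x hxmem
    rw [← Esub_eq_range p]
    exact hle hxmem
  · rintro x ⟨a, rfl⟩
    exact gh_mem_closure a

theorem stmt_7 (p : ℕ) (hp : p.Prime) (R : Type*) [CommRing R] (n : ℕ) :
    {x : ℕ → R | x ∈ XR p R ∧ ∀ k < n, x k = 0}
      = (Vmap p)^[n] '' (XR p R : Set (ℕ → R)) := by
  have hXR := XR_eq p hp R
  have hmem : ∀ x : ℕ → R, x ∈ XR p R ↔ x ∈ Set.range (gh p (R := R)) := fun x => by
    rw [← SetLike.mem_coe, hXR]
  ext x
  simp only [Set.mem_setOf_eq, Set.mem_image, hXR]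
  constructor
  · rintro ⟨hx, hz⟩
    obtain ⟨a, rfl⟩ := (hmem x).mp hx
    exact ⟨gh p (fun m => a (m + n)), ⟨_, rfl⟩,
      (gh_zeros_eq_iterate hp.ne_zero (fun k hk => hz k hk)).symm⟩
  · rintro ⟨y, hy, rfl⟩
    refine ⟨(hmem _).mpr (mem_range_gh_Vmap_iterate hp.ne_zero hy n), fun k hk => ?_⟩
    rw [Vmap_iterate, if_pos hk]
end

section
/- Let p be a prime and R a commutative ring. With X(R) ⊆ R^ℕ the closed subgroup generated by {V^n⟨r⟩}, the natural map X(R) → lim_n X(R)/V^n(X(R)) is an isomorphism of abelian groups; i.e., X(R) is complete and Hausdorff with respect to the filtration by the subgroups V^n(X(R)). -/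
open Function Set

section Verschiebung

variable (p : ℕ) {R : Type*} [CommRing R]

theorem Vmap_iterate_apply_of_lt (z : ℕ → R) {n k : ℕ} (hk : k < n) :
    (Vmap p)^[n] z k = 0 := by
  induction n generalizing k with
  | zero => omega
  | succ n ih =>
    rw [iterate_succ_apply']
    match k with
    | 0 => rfl
    | m + 1 => exact (congrArg _ (ih (by omega))).trans (mul_zero _)

theorem eq_zero_of_forall_mem_range_Vmap_iterate {x : ℕ → R}
    (hx : ∀ n, x ∈ range (Vmap p)^[n]) : x = 0 := by
  funext k
  obtain ⟨z, rfl⟩ := hx (k + 1)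
  exact Vmap_iterate_apply_of_lt p z k.lt_succ_self

variable (R) in
def verschiebung : AddMonoid.End (ℕ → R) where
  toFun := Vmap p
  map_zero' := by
    funext k
    match k with
    | 0 => rfl
    | m + 1 => exact mul_zero (p : R)
  map_add' x y := by
    funext k
    match k with
    | 0 => exact (add_zero 0).symm
    | m + 1 => exact mul_add (p : R) (x m) (y m)

theorem coe_verschiebung_pow (n : ℕ) : ⇑(verschiebung p R ^ n) = (Vmap p)^[n] := by
  rw [AddMonoid.End.coe_pow]
  rfl

theorem continuous_Vmap [TopologicalSpace R] [ContinuousMul R] : Continuous (Vmap p (R := R)) :=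
  continuous_pi fun k => match k with
  | 0 => continuous_const
  | m + 1 => continuous_const.mul (continuous_apply m)

theorem summable_Vmap_iterate [TopologicalSpace R] (u : ℕ → ℕ → R) :
    Summable fun i => (Vmap p)^[i] (u i) :=
  Pi.summable.2 fun k => summable_of_ne_finset_zero (s := Finset.range (k + 1)) fun i hi =>
    Vmap_iterate_apply_of_lt p (u i) (by simpa [Nat.lt_succ_iff] using hi)

theorem isClosed_XR [TopologicalSpace R] [DiscreteTopology R] :
    IsClosed (XR p R : Set (ℕ → R)) := by
  obtain rfl := DiscreteTopology.eq_bot (α := R)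
  let _ : TopologicalSpace R := ⊥
  exact AddSubgroup.isClosed_topologicalClosure _

theorem mapsTo_Vmap_XR : MapsTo (Vmap p) (XR p R : Set (ℕ → R)) (XR p R) := by
  let _ : TopologicalSpace R := ⊥
  have : DiscreteTopology R := ⟨rfl⟩
  set G := AddSubgroup.closure {x : ℕ → R | ∃ n r, x = (Vmap p)^[n] (teich p r)}
  have hG : G ≤ G.comap (verschiebung p R) := by
    refine (AddSubgroup.closure_le _).2 ?_
    rintro _ ⟨n, r, rfl⟩
    exact AddSubgroup.subset_closure ⟨n + 1, r, (iterate_succ_apply' _ _ _).symm⟩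
  exact fun _ hx => map_mem_closure (continuous_Vmap p) hx fun _ hz => hG hz

end Verschiebung

theorem stmt_8_general (p : ℕ) (R : Type*) [CommRing R] :
    -- Hausdorff: injectivity of the natural map to the inverse limit
    (∀ x : ℕ → R, x ∈ XR p R →
        (∀ n : ℕ, x ∈ (Vmap p)^[n] '' (XR p R : Set (ℕ → R))) → x = 0) ∧
    -- Completeness: surjectivity of the natural map to the inverse limit,
    -- i.e. every compatible sequence of approximations has a limit in `X(R)`.
    (∀ x : ℕ → (ℕ → R), (∀ n, x n ∈ XR p R) →
        (∀ n : ℕ, x (n + 1) - x n ∈ (Vmap p)^[n] '' (XR p R : Set (ℕ → R))) →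
        ∃ y ∈ XR p R, ∀ n : ℕ, y - x n ∈ (Vmap p)^[n] '' (XR p R : Set (ℕ → R))) := by
  refine ⟨fun x _ hx => eq_zero_of_forall_mem_range_Vmap_iterate p fun n =>
    image_subset_range _ _ (hx n), fun x hx hd => ?_⟩
  let _ : TopologicalSpace R := ⊥
  have : DiscreteTopology R := ⟨rfl⟩
  choose w hw hVw using hd
  have hsum : Summable fun i => x (i + 1) - x i := by
    simpa only [hVw] using summable_Vmap_iterate p w
  refine ⟨x 0 + ∑' i, (x (i + 1) - x i),
    add_mem (hx 0) (tsum_mem (isClosed_XR p) fun i => sub_mem (hx _) (hx i)), fun n => ?_⟩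
  have htail : x 0 + ∑' i, (x (i + 1) - x i) - x n = ∑' i, (x (i + n + 1) - x (i + n)) := by
    rw [← hsum.sum_add_tsum_nat_add n, Finset.sum_range_sub]
    abel
  refine ⟨∑' i, (Vmap p)^[i] (w (i + n)),
    tsum_mem (isClosed_XR p) fun i => (mapsTo_Vmap_XR p).iterate i (hw _), ?_⟩
  rw [htail, ← coe_verschiebung_pow, (summable_Vmap_iterate p _).map_tsum _
    (by simpa only [coe_verschiebung_pow] using (continuous_Vmap p).iterate n)]
  simp only [coe_verschiebung_pow, ← iterate_add_apply, add_comm n, hVw]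

/-- `X(R)` is complete and Hausdorff with respect to the filtration by the
subgroups `V^n(X(R))`; equivalently, the natural map
`X(R) → lim_n X(R)/V^n(X(R))` is an isomorphism of abelian groups. -/
theorem stmt_8 (p : ℕ) (hp : p.Prime) (R : Type*) [CommRing R] :
    -- Hausdorff: injectivity of the natural map to the inverse limit
    (∀ x : ℕ → R, x ∈ XR p R →
        (∀ n : ℕ, x ∈ (Vmap p)^[n] '' (XR p R : Set (ℕ → R))) → x = 0) ∧
    -- Completeness: surjectivity of the natural map to the inverse limit,
    -- i.e. every compatible sequence of approximations has a limit in `X(R)`.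
    (∀ x : ℕ → (ℕ → R), (∀ n, x n ∈ XR p R) →
        (∀ n : ℕ, x (n + 1) - x n ∈ (Vmap p)^[n] '' (XR p R : Set (ℕ → R))) →
        ∃ y ∈ XR p R, ∀ n : ℕ, y - x n ∈ (Vmap p)^[n] '' (XR p R : Set (ℕ → R))) :=
  stmt_8_general p R
end
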